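/- arXiv:2211.02836 — 3 statements merged into one kernel-verified Lean document; each statement's English description precedes it below -/
import Mathlib

section
/- For a quaternion tensor A under the T-product, (A^H*A)† = A†*(A^H)† and (A*A^H)† = (A^H)†*A†. -/
open scoped Quaternion BigOperators

noncomputable section

/-- A quaternion third-order tensor in `H^{n1 x n2 x n3}`, with the third
(circulant) index taken mod `n3`. -/
abbrev QT (n1 n2 n3 : ℕ) := Fin n1 → Fin n2 → ZMod n3 → ℍ[ℝ]

/-- The T-product of two quaternion tensors (circular convolution along the third mode). -/
def tmul {n1 n2 l n3 : ℕ} [NeZero n3] (A : QT n1 n2 n3) (B : QT n2 l n3) : QT n1 l n3 :=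
  fun i j k => ∑ p : Fin n2, ∑ m : ZMod n3, A i p m * B p j (k - m)

/-- The identity tensor: first frontal slice is the identity matrix, others zero. -/
def tid (n n3 : ℕ) : QT n n n3 := fun i j k => if i = j ∧ k = 0 then 1 else 0

/-- Conjugate transpose: conjugate-transpose each frontal slice and
reverse the order of slices 2 through n3. -/
def hconj {n1 n2 n3 : ℕ} (A : QT n1 n2 n3) : QT n2 n1 n3 :=
  fun j i k => star (A i j (-k))

/-- The four Penrose equations for the T-product. -/
def IsMP {n1 n2 n3 : ℕ} [NeZero n3] (A : QT n1 n2 n3) (X : QT n2 n1 n3) : Prop :=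
  tmul (tmul A X) A = A ∧ tmul (tmul X A) X = X ∧
    hconj (tmul A X) = tmul A X ∧ hconj (tmul X A) = tmul X A

lemma sum_swap4 {M : Type*} [AddCommMonoid M] {α β γ δ : Type*}
    [Fintype α] [Fintype β] [Fintype γ] [Fintype δ] (f : α → β → γ → δ → M) :
    ∑ a, ∑ b, ∑ c, ∑ d, f a b c d = ∑ c, ∑ d, ∑ a, ∑ b, f a b c d := by
  calc ∑ a, ∑ b, ∑ c, ∑ d, f a b c d
      = ∑ a, ∑ c, ∑ b, ∑ d, f a b c d :=
        Finset.sum_congr rfl fun a _ => Finset.sum_comm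
    _ = ∑ c, ∑ a, ∑ b, ∑ d, f a b c d := Finset.sum_comm
    _ = ∑ c, ∑ a, ∑ d, ∑ b, f a b c d :=
        Finset.sum_congr rfl fun c _ => Finset.sum_congr rfl fun a _ => Finset.sum_comm
    _ = ∑ c, ∑ d, ∑ a, ∑ b, f a b c d :=
        Finset.sum_congr rfl fun c _ => Finset.sum_comm

lemma tmul_assoc {n1 n2 n3 n4 N : ℕ} [NeZero N] (A : QT n1 n2 N) (B : QT n2 n3 N)
    (C : QT n3 n4 N) : tmul (tmul A B) C = tmul A (tmul B C) := by
  funext i j k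
  simp only [tmul, Finset.sum_mul, Finset.mul_sum]
  rw [sum_swap4 (fun (q : Fin n3) (m : ZMod N) (p : Fin n2) (m' : ZMod N) =>
    A i p m' * B p q (m - m') * C q j (k - m))]
  refine Finset.sum_congr rfl fun p _ => ?_
  refine Finset.sum_congr rfl fun m' _ => ?_
  refine Finset.sum_congr rfl fun q _ => ?_
  refine Fintype.sum_equiv (Equiv.subRight m') _ _ fun m'' => ?_
  simp only [Equiv.subRight_apply, mul_assoc]
  congr 3
  abel

lemma hconj_hconj {n1 n2 N : ℕ} (A : QT n1 n2 N) : hconj (hconj A) = A := by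
  funext i j k; simp [hconj]

lemma hconj_tmul {n1 n2 n3 N : ℕ} [NeZero N] (A : QT n1 n2 N) (B : QT n2 n3 N) :
    hconj (tmul A B) = tmul (hconj B) (hconj A) := by
  funext j i k
  simp only [tmul, hconj, star_sum, star_mul]
  refine Finset.sum_congr rfl fun p _ => ?_
  refine Fintype.sum_equiv (Equiv.addLeft k) _ _ fun m => ?_
  simp only [Equiv.coe_addLeft, sub_add_cancel_left, neg_neg, neg_add, sub_eq_add_neg,
    neg_add_cancel_left]

lemma mp_unique {n1 n2 N : ℕ} [NeZero N] {A : QT n1 n2 N} {X X' : QT n2 n1 N}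
    (h : IsMP A X) (h' : IsMP A X') : X = X' := by
  obtain ⟨h1, h2, h3, h4⟩ := h
  obtain ⟨h1', h2', h3', h4'⟩ := h'
  have e3 : tmul (hconj X) (hconj A) = tmul A X := by rw [← hconj_tmul, h3]
  have e4' : tmul (hconj A) (hconj X') = tmul X' A := by rw [← hconj_tmul, h4']
  have hXAX : tmul X (tmul A X) = X := by rw [← tmul_assoc, h2]
  have hAXA : tmul A (tmul X A) = A := by rw [← tmul_assoc, h1]
  have hX'AX' : tmul X' (tmul A X') = X' := by rw [← tmul_assoc, h2']
  have hAH1 : tmul (hconj A) (tmul A X') = hconj A := by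
    conv_rhs => rw [← h1']
    rw [hconj_tmul, h3']
  have hXAAH : tmul (tmul X A) (hconj A) = hconj A := by
    have := congrArg hconj hAXA
    rwa [hconj_tmul, h4] at this
  have key1 : X = tmul X (tmul A X') := by
    calc X = tmul X (tmul A X) := hXAX.symm
      _ = tmul X (tmul (hconj X) (hconj A)) := by rw [e3]
      _ = tmul X (tmul (hconj X) (tmul (hconj A) (tmul A X'))) := by rw [hAH1]
      _ = tmul X (tmul (tmul (hconj X) (hconj A)) (tmul A X')) := by rw [tmul_assoc]
      _ = tmul X (tmul (tmul A X) (tmul A X')) := by rw [e3]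
      _ = tmul (tmul X (tmul A X)) (tmul A X') := (tmul_assoc _ _ _).symm
      _ = tmul X (tmul A X') := by rw [hXAX]
  have key2 : X' = tmul X (tmul A X') := by
    calc X' = tmul X' (tmul A X') := hX'AX'.symm
      _ = tmul (tmul X' A) X' := (tmul_assoc _ _ _).symm
      _ = tmul (tmul (hconj A) (hconj X')) X' := by rw [e4']
      _ = tmul (tmul (tmul (tmul X A) (hconj A)) (hconj X')) X' := by rw [hXAAH]
      _ = tmul (tmul (tmul X A) (tmul (hconj A) (hconj X'))) X' := by
            rw [tmul_assoc (tmul X A)]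
      _ = tmul (tmul (tmul X A) (tmul X' A)) X' := by rw [e4']
      _ = tmul (tmul X A) (tmul (tmul X' A) X') := by rw [tmul_assoc]
      _ = tmul (tmul X A) X' := by rw [h2']
      _ = tmul X (tmul A X') := tmul_assoc _ _ _
  exact key1.trans key2.symm

lemma IsMP.hconj' {n1 n2 N : ℕ} [NeZero N] {A : QT n1 n2 N} {X : QT n2 n1 N}
    (h : IsMP A X) : IsMP (hconj A) (hconj X) := by
  obtain ⟨h1, h2, h3, h4⟩ := h
  refine ⟨?_, ?_, ?_, ?_⟩
  · rw [← hconj_tmul, ← hconj_tmul, ← tmul_assoc, h1]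
  · rw [← hconj_tmul, ← hconj_tmul, ← tmul_assoc, h2]
  · rw [← hconj_tmul, hconj_hconj, h4]
  · rw [← hconj_tmul, hconj_hconj, h3]

lemma isMP_hconj_mul_aux {n1 n2 N : ℕ} [NeZero N] {A : QT n1 n2 N} {X : QT n2 n1 N}
    (hX : IsMP A X) : IsMP (tmul (hconj A) A) (tmul X (hconj X)) := by
  obtain ⟨h1, h2, h3, h4⟩ := hX
  have e3 : tmul (hconj X) (hconj A) = tmul A X := by rw [← hconj_tmul, h3]
  have e4 : tmul (hconj A) (hconj X) = tmul X A := by rw [← hconj_tmul, h4]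
  have hXAX : tmul X (tmul A X) = X := by rw [← tmul_assoc, h2]
  have hAXA : tmul A (tmul X A) = A := by rw [← tmul_assoc, h1]
  have heXH : tmul (tmul A X) (hconj X) = hconj X := by
    have := congrArg hconj hXAX
    rwa [hconj_tmul, h3] at this
  have hXAAH : tmul (tmul X A) (hconj A) = hconj A := by
    have := congrArg hconj hAXA
    rwa [hconj_tmul, h4] at this
  have hBZ : tmul (tmul (hconj A) A) (tmul X (hconj X)) = tmul X A := by
    calc tmul (tmul (hconj A) A) (tmul X (hconj X))
        = tmul (hconj A) (tmul A (tmul X (hconj X))) := tmul_assoc _ _ _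
      _ = tmul (hconj A) (tmul (tmul A X) (hconj X)) := by rw [tmul_assoc]
      _ = tmul (hconj A) (hconj X) := by rw [heXH]
      _ = tmul X A := e4
  have hZB : tmul (tmul X (hconj X)) (tmul (hconj A) A) = tmul X A := by
    calc tmul (tmul X (hconj X)) (tmul (hconj A) A)
        = tmul X (tmul (hconj X) (tmul (hconj A) A)) := tmul_assoc _ _ _
      _ = tmul X (tmul (tmul (hconj X) (hconj A)) A) := by rw [tmul_assoc]
      _ = tmul X (tmul (tmul A X) A) := by rw [e3]
      _ = tmul X A := by rw [h1]
  refine ⟨?_, ?_, ?_, ?_⟩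
  · rw [hBZ, ← tmul_assoc, hXAAH]
  · rw [hZB, ← tmul_assoc, h2]
  · rw [hBZ, h4]
  · rw [hZB, h4]

theorem moorePenrose_hconj_mul {n1 n2 n3 : ℕ} [NeZero n3]
    (A : QT n1 n2 n3) (X : QT n2 n1 n3) (Y : QT n1 n2 n3)
    (hX : IsMP A X) (hY : IsMP (hconj A) Y) :
    IsMP (tmul (hconj A) A) (tmul X Y) ∧ IsMP (tmul A (hconj A)) (tmul Y X) := by
  have hYX : Y = hconj X := mp_unique hY hX.hconj'
  subst hYX
  refine ⟨isMP_hconj_mul_aux hX, ?_⟩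
  have := isMP_hconj_mul_aux hX.hconj'
  rwa [hconj_hconj, hconj_hconj] at this
end
end

section
/- A quaternion matrix A is right invertible along B, C if and only if the outer inverse A^(2)_{T1,S1} with right range space T1 = R_r(B) and right null space S1 = N_r(C) exists, and in that case they coincide. -/
open scoped Quaternion

noncomputable section

/-- The column right space of a quaternion matrix. -/
def Rr {m n : ℕ} (M : Matrix (Fin m) (Fin n) ℍ[ℝ]) : Set (Fin m → ℍ[ℝ]) :=
  {y | ∃ x, y = M.mulVec x}

/-- The right null space of a quaternion matrix. -/
def Nr {m n : ℕ} (M : Matrix (Fin m) (Fin n) ℍ[ℝ]) : Set (Fin n → ℍ[ℝ]) :=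
  {x | M.mulVec x = 0}

/-!
Everything reduces to two factorization criteria: `Rr Q ⊆ Rr P` iff `Q = P * M` for some `M`,
and `Nr C ⊆ Nr X` iff `X = Y * C` for some `Y`. The second needs that `ℍ[ℝ]` is a division
ring: if a row of `X` lay outside the row space of `C`, a linear functional separating them
would be `w ↦ w ⬝ᵥ v` for a vector `v` killed by `C` but not by `X`.
With these, every condition becomes a matrix identity, and uniqueness is the chain
`Z = Y₁ C = Y₁ C A X = Z A X = Z A B N = B N = X`.
-/

theorem LinearMap.apply_eq_dotProduct {R n : Type*} [Semiring R] [Fintype n] [DecidableEq n]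
    (φ : (n → R) →ₗ[R] R) (w : n → R) : φ w = w ⬝ᵥ fun j => φ (Pi.single j 1) := by
  rw [LinearMap.pi_apply_eq_sum_univ φ w]
  refine Finset.sum_congr rfl fun j _ => ?_
  congr 3 with k
  simp [Pi.single_apply, eq_comm]

namespace Matrix

variable {R K : Type*} {m n p : Type*} [Fintype n] [Fintype p]

theorem exists_eq_mul_of_range_mulVec_subset [Semiring R]
    {P : Matrix m n R} {Q : Matrix m p R} (h : Set.range Q.mulVec ⊆ Set.range P.mulVec) :
    ∃ M : Matrix n p R, Q = P * M := by
  classical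
  choose x hx using fun j : p => h ⟨Pi.single j 1, rfl⟩
  refine ⟨of fun i j => x j i, ext fun i j => ?_⟩
  have hcol := congrFun (hx j) i
  rw [mulVec_single_one] at hcol
  simpa [mul_apply, mulVec, dotProduct] using hcol.symm

theorem exists_eq_mul_of_ker_mulVec_subset [DivisionRing K]
    {C : Matrix p n K} {X : Matrix m n K} (h : ∀ v, C *ᵥ v = 0 → X *ᵥ v = 0) :
    ∃ Y : Matrix m p K, X = Y * C := by
  classical
  have hrow : ∀ i, X i ∈ LinearMap.range C.vecMulLinear := by
    intro i
    by_contra hi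
    obtain ⟨φ, hφX, hφC⟩ := Submodule.exists_dual_map_eq_bot_of_notMem hi inferInstance
    set v : n → K := fun j => φ (Pi.single j 1)
    have hCv : C *ᵥ v = 0 := by
      funext a
      have hCa : φ (C a) ∈ Submodule.map φ (LinearMap.range C.vecMulLinear) :=
        Submodule.mem_map_of_mem ⟨Pi.single a 1, single_one_vecMul a C⟩
      rw [hφC, Submodule.mem_bot] at hCa
      exact (φ.apply_eq_dotProduct (C a)).symm.trans hCa
    exact hφX ((φ.apply_eq_dotProduct (X i)).trans (congrFun (h v hCv) i))
  choose y hy using hrow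
  refine ⟨of y, ext fun i j => ?_⟩
  rw [← hy i]
  simp [mul_apply, vecMul, dotProduct]

theorem right_inverse_along_unique [Semiring R] [Fintype m] {l k : Type*} [Fintype l] [Fintype k]
    {A : Matrix m n R} {B : Matrix n l R} {C : Matrix k m R} {Z X : Matrix n m R}
    {X₁ : Matrix l m R} {Y₁ : Matrix n k R} (hZAB : Z * A * B = B) (hZC : Z = Y₁ * C)
    (hCAX : C * A * X = C) (hXB : X = B * X₁) : Z = X :=
  calc Z = Y₁ * (C * A * X) := by rw [hCAX, hZC]
    _ = Z * A * B * X₁ := by rw [hZC, hXB]; simp only [Matrix.mul_assoc]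
    _ = X := by rw [hZAB, hXB]

end Matrix

open Matrix

section Quaternion

variable {m n p : ℕ}

theorem Rr_eq_range (M : Matrix (Fin m) (Fin n) ℍ[ℝ]) : Rr M = Set.range M.mulVec :=
  Set.ext fun _ => ⟨fun ⟨x, hx⟩ => ⟨x, hx.symm⟩, fun ⟨x, hx⟩ => ⟨x, hx.symm⟩⟩

theorem Rr_subset_Rr_iff {P : Matrix (Fin m) (Fin n) ℍ[ℝ]} {Q : Matrix (Fin m) (Fin p) ℍ[ℝ]} :
    Rr Q ⊆ Rr P ↔ ∃ M : Matrix (Fin n) (Fin p) ℍ[ℝ], Q = P * M := by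
  refine ⟨fun h => exists_eq_mul_of_range_mulVec_subset ?_, ?_⟩
  · simpa only [Rr_eq_range] using h
  · rintro ⟨M, rfl⟩ _ ⟨x, rfl⟩
    exact ⟨M *ᵥ x, (mulVec_mulVec x P M).symm⟩

theorem Nr_subset_Nr_iff {C : Matrix (Fin p) (Fin n) ℍ[ℝ]} {X : Matrix (Fin m) (Fin n) ℍ[ℝ]} :
    Nr C ⊆ Nr X ↔ ∃ Y : Matrix (Fin m) (Fin p) ℍ[ℝ], X = Y * C := by
  refine ⟨fun h => exists_eq_mul_of_ker_mulVec_subset fun v hv => h hv, ?_⟩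
  rintro ⟨Y, rfl⟩ v (hv : C *ᵥ v = 0)
  show (Y * C) *ᵥ v = 0
  rw [← mulVec_mulVec, hv, mulVec_zero]

variable {n1 n2 l k : ℕ} {A : Matrix (Fin n1) (Fin n2) ℍ[ℝ]} {B : Matrix (Fin n2) (Fin l) ℍ[ℝ]}
  {C : Matrix (Fin k) (Fin n1) ℍ[ℝ]}

theorem outer_inverse_of_right_inverse_along {Z : Matrix (Fin n2) (Fin n1) ℍ[ℝ]}
    {X₁ : Matrix (Fin l) (Fin n1) ℍ[ℝ]} {Y₁ : Matrix (Fin n2) (Fin k) ℍ[ℝ]}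
    (hZAB : Z * A * B = B) (hCAZ : C * A * Z = C) (hZB : Z = B * X₁) (hZC : Z = Y₁ * C) :
    Z * A * Z = Z ∧ Rr Z = Rr B ∧ Nr Z = Nr C := by
  refine ⟨?_, ?_, ?_⟩
  · calc Z * A * Z = Z * A * B * X₁ := by rw [Matrix.mul_assoc _ B, ← hZB]
      _ = Z := by rw [hZAB, hZB]
  · refine (Rr_subset_Rr_iff.2 ⟨X₁, hZB⟩).antisymm (Rr_subset_Rr_iff.2 ⟨A * B, ?_⟩)
    rw [← Matrix.mul_assoc, hZAB]
  · exact (Nr_subset_Nr_iff.2 ⟨C * A, hCAZ.symm⟩).antisymm (Nr_subset_Nr_iff.2 ⟨Y₁, hZC⟩)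

theorem right_inverse_along_of_outer_inverse {X : Matrix (Fin n2) (Fin n1) ℍ[ℝ]}
    (hXAX : X * A * X = X) (hR : Rr X = Rr B) (hN : Nr X = Nr C) :
    X * A * B = B ∧ C * A * X = C ∧ (∃ X₁, X = B * X₁) ∧ ∃ Y₁, X = Y₁ * C := by
  obtain ⟨M, hBX⟩ := Rr_subset_Rr_iff.1 hR.ge
  obtain ⟨N, hCX⟩ := Nr_subset_Nr_iff.1 hN.le
  refine ⟨?_, ?_, Rr_subset_Rr_iff.1 hR.le, Nr_subset_Nr_iff.1 hN.ge⟩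
  · rw [hBX, ← Matrix.mul_assoc, hXAX]
  · calc C * A * X = N * (X * A * X) := by rw [hCX]; simp only [Matrix.mul_assoc]
      _ = C := by rw [hXAX, hCX]

end Quaternion

theorem right_inverse_along_iff_outer_inverse {n1 n2 l k : ℕ}
    (A : Matrix (Fin n1) (Fin n2) ℍ[ℝ]) (B : Matrix (Fin n2) (Fin l) ℍ[ℝ])
    (C : Matrix (Fin k) (Fin n1) ℍ[ℝ]) :
    ((∃ (Z : Matrix (Fin n2) (Fin n1) ℍ[ℝ]) (X1 : Matrix (Fin l) (Fin n1) ℍ[ℝ])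
        (Y1 : Matrix (Fin n2) (Fin k) ℍ[ℝ]),
        Z * A * B = B ∧ C * A * Z = C ∧ Z = B * X1 ∧ Z = Y1 * C) ↔
      (∃ X : Matrix (Fin n2) (Fin n1) ℍ[ℝ], X * A * X = X ∧ Rr X = Rr B ∧ Nr X = Nr C)) ∧
    (∀ (Z : Matrix (Fin n2) (Fin n1) ℍ[ℝ]) (X1 : Matrix (Fin l) (Fin n1) ℍ[ℝ])
        (Y1 : Matrix (Fin n2) (Fin k) ℍ[ℝ]) (X : Matrix (Fin n2) (Fin n1) ℍ[ℝ]),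
        Z * A * B = B → C * A * Z = C → Z = B * X1 → Z = Y1 * C →
        X * A * X = X → Rr X = Rr B → Nr X = Nr C → Z = X) := by
  refine ⟨⟨?_, ?_⟩, ?_⟩
  · rintro ⟨Z, X1, Y1, hZAB, hCAZ, hZB, hZC⟩
    exact ⟨Z, outer_inverse_of_right_inverse_along hZAB hCAZ hZB hZC⟩
  · rintro ⟨X, hXAX, hR, hN⟩
    obtain ⟨hXAB, hCAX, ⟨X1, hXB⟩, Y1, hXC⟩ := right_inverse_along_of_outer_inverse hXAX hR hN
    exact ⟨X, X1, Y1, hXAB, hCAX, hXB, hXC⟩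
  · intro Z _ Y1 X hZAB _ _ hZC hXAX hR hN
    obtain ⟨-, hCAX, ⟨X1, hXB⟩, -⟩ := right_inverse_along_of_outer_inverse hXAX hR hN
    exact right_inverse_along_unique hZAB hZC hCAX hXB
end
end

section
/- Let A be an n1×n2 quaternion matrix of rank r, let B = F̂Ĝ and C = F̃G̃ be full-rank decompositions (F̂ ∈ H^{n2×r}, Ĝ ∈ H^{r×l}, F̃ ∈ H^{k×r}, G̃ ∈ H^{r×n1}, all of rank r). If A is right invertible along B, C, then G̃AF̂ is invertible and the right inverse of A along B, C equals F̂(G̃AF̂)^{-1}G̃. -/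
open scoped Quaternion

noncomputable section

private lemma ext_of_mulVec {R : Type*} [NonAssocSemiring R] {a b : ℕ}
    {X Y : Matrix (Fin a) (Fin b) R}
    (h : ∀ v, X.mulVec v = Y.mulVec v) : X = Y := by
  ext i j
  have := congrFun (h (Pi.single j 1)) i
  simpa [Matrix.mulVec_single] using this

private lemma left_cancel {a b c : ℕ} (F : Matrix (Fin a) (Fin b) ℍ[ℝ])
    (hF : Function.Injective F.mulVec) (X Y : Matrix (Fin b) (Fin c) ℍ[ℝ])
    (h : F * X = F * Y) : X = Y := by
  apply ext_of_mulVec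
  intro v
  apply hF
  rw [Matrix.mulVec_mulVec, Matrix.mulVec_mulVec, h]

private lemma right_cancel {a b c : ℕ} (G : Matrix (Fin a) (Fin b) ℍ[ℝ])
    (hG : Function.Surjective G.mulVec) (X Y : Matrix (Fin c) (Fin a) ℍ[ℝ])
    (h : X * G = Y * G) : X = Y := by
  apply ext_of_mulVec
  intro w
  obtain ⟨v, rfl⟩ := hG w
  rw [Matrix.mulVec_mulVec, Matrix.mulVec_mulVec, h]

theorem right_inverse_along_full_rank {n1 n2 l k r : ℕ}
    (A : Matrix (Fin n1) (Fin n2) ℍ[ℝ])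
    (hA : ∃ (F : Matrix (Fin n1) (Fin r) ℍ[ℝ]) (G : Matrix (Fin r) (Fin n2) ℍ[ℝ]),
      A = F * G ∧ Function.Injective F.mulVec ∧ Function.Surjective G.mulVec)
    (B : Matrix (Fin n2) (Fin l) ℍ[ℝ]) (C : Matrix (Fin k) (Fin n1) ℍ[ℝ])
    (Fh : Matrix (Fin n2) (Fin r) ℍ[ℝ]) (Gh : Matrix (Fin r) (Fin l) ℍ[ℝ])
    (hB : B = Fh * Gh) (hFh : Function.Injective Fh.mulVec)
    (hGh : Function.Surjective Gh.mulVec)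
    (Ft : Matrix (Fin k) (Fin r) ℍ[ℝ]) (Gt : Matrix (Fin r) (Fin n1) ℍ[ℝ])
    (hC : C = Ft * Gt) (hFt : Function.Injective Ft.mulVec)
    (hGt : Function.Surjective Gt.mulVec)
    (Z : Matrix (Fin n2) (Fin n1) ℍ[ℝ])
    (h1 : Z * A * B = B) (h2 : C * A * Z = C)
    (hX : ∃ X1 : Matrix (Fin l) (Fin n1) ℍ[ℝ], Z = B * X1)
    (hY : ∃ Y1 : Matrix (Fin n2) (Fin k) ℍ[ℝ], Z = Y1 * C) :
    ∃ M : Matrix (Fin r) (Fin r) ℍ[ℝ],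
      Gt * A * Fh * M = 1 ∧ M * (Gt * A * Fh) = 1 ∧ Z = Fh * M * Gt := by
  obtain ⟨X1, hX1⟩ := hX
  obtain ⟨Y1, hY1⟩ := hY
  set U : Matrix (Fin r) (Fin n1) ℍ[ℝ] := Gh * X1 with hU
  set W : Matrix (Fin n2) (Fin r) ℍ[ℝ] := Y1 * Ft with hW
  have hZU : Z = Fh * U := by rw [hX1, hB, hU, Matrix.mul_assoc]
  have hZW : Z = W * Gt := by rw [hY1, hC, hW, Matrix.mul_assoc]
  -- U * A * Fh = 1
  have hUA : U * A * Fh = 1 := by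
    apply right_cancel Gh hGh
    apply left_cancel Fh hFh
    have : Fh * (U * A * Fh * Gh) = Z * A * B := by
      rw [hZU, hB]; simp only [Matrix.mul_assoc]
    rw [this, h1, hB, Matrix.one_mul]
  -- Gt * A * W = 1
  have hAW : Gt * A * W = 1 := by
    apply right_cancel Gt hGt
    apply left_cancel Ft hFt
    have : Ft * (Gt * A * W * Gt) = C * A * Z := by
      rw [hZW, hC]; simp only [Matrix.mul_assoc]
    rw [this, h2, hC, Matrix.one_mul]
  refine ⟨U * A * W, ?_, ?_, ?_⟩
  · calc Gt * A * Fh * (U * A * W) = (Gt * A * (Fh * U) * A * W) := by simp only [Matrix.mul_assoc]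
    _ = Gt * A * (W * Gt) * A * W := by rw [← hZU, ← hZW]
    _ = (Gt * A * W) * (Gt * A * W) := by simp only [Matrix.mul_assoc]
    _ = 1 := by rw [hAW, Matrix.one_mul]
  · calc U * A * W * (Gt * A * Fh) = U * A * (W * Gt) * A * Fh := by simp only [Matrix.mul_assoc]
    _ = U * A * (Fh * U) * A * Fh := by rw [← hZW, ← hZU]
    _ = (U * A * Fh) * (U * A * Fh) := by simp only [Matrix.mul_assoc]
    _ = 1 := by rw [hUA, Matrix.one_mul]
  · have hZAZ : Z * A * Z = Z := by
      calc Z * A * Z = Z * A * (B * X1) := by rw [← hX1]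
      _ = Z * A * B * X1 := by simp only [Matrix.mul_assoc]
      _ = B * X1 := by rw [h1]
      _ = Z := hX1.symm
    calc Z = Z * A * Z := hZAZ.symm
    _ = (Fh * U) * A * (W * Gt) := by rw [← hZU, ← hZW]
    _ = Fh * (U * A * W) * Gt := by simp only [Matrix.mul_assoc]
end
end
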